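/- (Two-variable case.) Let 𝒜₀, 𝒜₁, 𝒜₂ be abelian categories with complete cotorsion pairs (𝒟ᵢ, ℰᵢ), and let F : 𝒜₁ × 𝒜₂ → 𝒜₀ be a two-variable left adjoint with right adjoints G¹, G². Assume: (0a) for every D₂ ∈ 𝒟₂ the class 𝒟₁ is F(−, D₂)-right split, and for every D₁ ∈ 𝒟₁ the class 𝒟₂ is F(D₁, −)-right split; (0b) F(D₁, D₂) ∈ 𝒟₀ whenever D₁ ∈ 𝒟₁ and D₂ ∈ 𝒟₂. Then for all short exact sequences 0 → Aᵢ →^{fᵢ} Bᵢ → Dᵢ → 0 with Dᵢ ∈ 𝒟ᵢ (i = 1, 2), the pushout product □_F(f₁, f₂) is a monomorphism and its cokernel is isomorphic to F(D₁, D₂). -/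

import Mathlib

open CategoryTheory CategoryTheory.Limits CategoryTheory.Abelian Opposite

universe w₀ w₁ w₂ v₀ v₁ v₂ u₀ u₁ u₂

/-- `(𝒟, ℰ)` is a cotorsion pair on the abelian category `C`. -/
def IsCotorsionPair {C : Type u₀} [Category.{v₀} C] [Abelian C] [HasExt.{w₀} C]
    (𝒟 ℰ : Set C) : Prop :=
  (∀ X : C, X ∈ 𝒟 ↔ ∀ Y ∈ ℰ, Subsingleton (Ext X Y 1)) ∧
  (∀ Y : C, Y ∈ ℰ ↔ ∀ X ∈ 𝒟, Subsingleton (Ext X Y 1))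

/-- The cotorsion pair `(𝒟, ℰ)` is complete: every object `X` fits in short exact
sequences `0 → X → E → D → 0` and `0 → E′ → D′ → X → 0` with `D, D′ ∈ 𝒟`, `E, E′ ∈ ℰ`. -/
def CPIsComplete {C : Type u₀} [Category.{v₀} C] [Abelian C] (𝒟 ℰ : Set C) : Prop :=
  (∀ X : C, ∃ (E D : C) (i : X ⟶ E) (p : E ⟶ D) (w : i ≫ p = 0),
    (ShortComplex.mk i p w).ShortExact ∧ E ∈ ℰ ∧ D ∈ 𝒟) ∧
  (∀ X : C, ∃ (E D : C) (i : E ⟶ D) (p : D ⟶ X) (w : i ≫ p = 0),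
    (ShortComplex.mk i p w).ShortExact ∧ E ∈ ℰ ∧ D ∈ 𝒟)

/-- A class `𝒮` is `F`-right split if every short exact sequence `0 → X → Y → S → 0` with
`S ∈ 𝒮` remains short exact after applying `F`. -/
def RightSplit {A : Type u₁} [Category.{v₁} A] [Abelian A]
    {B : Type u₂} [Category.{v₂} B] [Abelian B]
    (F : A ⥤ B) [F.PreservesZeroMorphisms] (𝒮 : Set A) : Prop :=
  ∀ S : ShortComplex A, S.ShortExact → S.X₃ ∈ 𝒮 → (S.map F).ShortExact

/-! Right exactness of `F` in each variable alone identifies the cokernel of `□_F(f₁, f₂)` with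
`F(D₁, D₂)`. For monomorphy, a diagram chase shows that `□_F(f₁, g)` is mono as soon as
`F(f₁, Y)` and `F(D₁, g)` are, for any `g : X ⟶ Y`. This does not apply to `f₂` directly, since
`B₂` need not lie in `𝒟₂`; instead pull `f₂` back along a `𝒟₂`-precover `q : D ↠ B₂`. The pullback
`0 → P → D → D₂ → 0` has `D, D₂ ∈ 𝒟₂`, so both conditions hold by the splitting hypotheses, and
monomorphy descends from `□_F(f₁, P ⟶ D)` to `□_F(f₁, f₂)`. -/

open scoped Pseudoelement

namespace CategoryTheory.Limits

lemma pushout.epi_map {C : Type*} [Category C] {W X Y Z S T : C} (f₁ : S ⟶ W) (f₂ : S ⟶ X)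
    [HasPushout f₁ f₂] (g₁ : T ⟶ Y) (g₂ : T ⟶ Z) [HasPushout g₁ g₂] (i₁ : W ⟶ Y) (i₂ : X ⟶ Z)
    (i₃ : S ⟶ T) (eq₁ : f₁ ≫ i₁ = i₃ ≫ g₁) (eq₂ : f₂ ≫ i₂ = i₃ ≫ g₂) [Epi i₁] [Epi i₂] :
    Epi (pushout.map f₁ f₂ g₁ g₂ i₁ i₂ i₃ eq₁ eq₂) where
  left_cancellation u v huv := by
    ext
    · simpa only [pushout.inl_desc_assoc, Category.assoc, cancel_epi] using
        pushout.inl _ _ ≫= huv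
    · simpa only [pushout.inr_desc_assoc, Category.assoc, cancel_epi] using
        pushout.inr _ _ ≫= huv

end CategoryTheory.Limits

section Abelian

variable {C : Type u₀} [Category.{v₀} C] [Abelian C]

theorem CategoryTheory.ShortComplex.Exact.map_mk {D : Type*} [Category* D] [Abelian D]
    {X Y Z : C} {f : X ⟶ Y} {g : Y ⟶ Z} {w : f ≫ g = 0} (h : (ShortComplex.mk f g w).Exact)
    [Epi g] (H : C ⥤ D) [PreservesFiniteColimits H] :
    (ShortComplex.mk (H.map f) (H.map g) (by rw [← H.map_comp, w, H.map_zero])).Exact :=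
  h.map_of_epi_of_preservesCokernel H ‹_› inferInstance

lemma exact_pushout_inl_desc_zero {X Y₁ Y₂ V : C} (a : X ⟶ Y₁) (b : X ⟶ Y₂) {σ : Y₂ ⟶ V}
    {w : b ≫ σ = 0} (hb : (ShortComplex.mk b σ w).Exact) [Epi σ] :
    (ShortComplex.mk (pushout.inl a b) (pushout.desc 0 σ (by rw [comp_zero, w]))
      (pushout.inl_desc _ _ _)).Exact := by
  have : Epi (pushout.desc 0 σ (by rw [comp_zero, w]) : pushout a b ⟶ V) :=
    epi_of_epi_fac (pushout.inr_desc _ _ _)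
  refine ShortComplex.exact_of_g_is_cokernel _
    (CokernelCofork.IsColimit.ofπ' _ _ fun {T} t ht => ⟨hb.desc (pushout.inr a b ≫ t) ?_, ?_⟩)
  · have ht : pushout.inl a b ≫ t = 0 := ht
    rw [← pushout.condition_assoc, ht, comp_zero]
  · ext
    · rw [pushout.inl_desc_assoc, zero_comp, ht]
    · rw [pushout.inr_desc_assoc]
      exact hb.g_desc _ _

open CategoryTheory.Abelian.Pseudoelement hiding comp_apply in
theorem CategoryTheory.ShortComplex.ShortExact.pullback_snd {X Y Z Y' : C} {f : X ⟶ Y}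
    {g : Y ⟶ Z} {w : f ≫ g = 0} (hS : (ShortComplex.mk f g w).ShortExact) (q : Y' ⟶ Y) [Epi q] :
    (ShortComplex.mk (pullback.snd f q) (q ≫ g)
      (by rw [← pullback.condition_assoc, w, comp_zero])).ShortExact := by
  have := hS.mono_f
  have := hS.epi_g
  refine ⟨exact_of_pseudo_exact _ fun y hy => ?_⟩
  obtain ⟨x, hx⟩ := pseudo_exact_of_exact hS.exact (q y) (by rwa [← Pseudoelement.comp_apply])
  obtain ⟨z, -, hz⟩ := pseudo_pullback hx
  exact ⟨z, hz⟩

end Abelian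

section PushoutProduct

variable {A₀ : Type u₀} [Category.{v₀} A₀] [Abelian A₀]
  {A₁ : Type u₁} [Category.{v₁} A₁] {A₂ : Type u₂} [Category.{v₂} A₂] (F : A₁ ⥤ A₂ ⥤ A₀)

noncomputable def pushoutProduct {A₁' B₁ : A₁} {A₂' B₂ : A₂} (f₁ : A₁' ⟶ B₁) (f₂ : A₂' ⟶ B₂) :
    pushout ((F.obj A₁').map f₂) ((F.map f₁).app A₂') ⟶ (F.obj B₁).obj B₂ :=
  pushout.desc ((F.map f₁).app B₂) ((F.obj B₁).map f₂) ((F.map f₁).naturality f₂)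

lemma inl_pushoutProduct {A₁' B₁ : A₁} {A₂' B₂ : A₂} (f₁ : A₁' ⟶ B₁) (f₂ : A₂' ⟶ B₂) :
    pushout.inl _ _ ≫ pushoutProduct F f₁ f₂ = (F.map f₁).app B₂ :=
  pushout.inl_desc _ _ _

lemma inr_pushoutProduct {A₁' B₁ : A₁} {A₂' B₂ : A₂} (f₁ : A₁' ⟶ B₁) (f₂ : A₂' ⟶ B₂) :
    pushout.inr _ _ ≫ pushoutProduct F f₁ f₂ = (F.obj B₁).map f₂ :=
  pushout.inr_desc _ _ _

lemma map_app_comp_map_app_eq_zero [HasZeroMorphisms A₁] {X₁ Y₁ Z₁ : A₁} {f : X₁ ⟶ Y₁}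
    {g : Y₁ ⟶ Z₁} (w : f ≫ g = 0) (X : A₂) [(F.flip.obj X).PreservesZeroMorphisms] :
    (F.map f).app X ≫ (F.map g).app X = 0 :=
  ((F.flip.obj X).map_comp f g).symm.trans (by rw [w, Functor.map_zero])

open CategoryTheory.Abelian.Pseudoelement hiding comp_apply zero_apply in
theorem mono_pushoutProduct [Abelian A₁] {A₁' B₁ D₁ : A₁} {f₁ : A₁' ⟶ B₁} {p₁ : B₁ ⟶ D₁}
    {w₁ : f₁ ≫ p₁ = 0} (h₁ : (ShortComplex.mk f₁ p₁ w₁).Exact) [Epi p₁] {X Y : A₂} (g : X ⟶ Y)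
    [∀ X₂, PreservesFiniteColimits (F.flip.obj X₂)]
    [Mono ((F.map f₁).app Y)] [Mono ((F.obj D₁).map g)] :
    Mono (pushoutProduct F f₁ g) := by
  have : Epi ((F.map p₁).app X) := (F.flip.obj X).map_epi p₁
  have hQ := exact_pushout_inl_desc_zero ((F.obj A₁').map g) ((F.map f₁).app X)
    (h₁.map_mk (F.flip.obj X))
  set ρ : pushout ((F.obj A₁').map g) ((F.map f₁).app X) ⟶ (F.obj D₁).obj X :=
    pushout.desc 0 ((F.map p₁).app X) (by rw [comp_zero, map_app_comp_map_app_eq_zero F w₁])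
  have hρ : ρ ≫ (F.obj D₁).map g = pushoutProduct F f₁ g ≫ (F.map p₁).app Y := by
    ext
    · rw [pushout.inl_desc_assoc, zero_comp, ← Category.assoc, inl_pushoutProduct,
        map_app_comp_map_app_eq_zero F w₁]
    · rw [pushout.inr_desc_assoc, ← Category.assoc, inr_pushoutProduct,
        (F.map p₁).naturality g]
  apply mono_of_zero_of_map_zero
  intro x hx
  have hρx : ρ x = 0 := zero_of_map_zero _ (pseudo_injective_of_mono _) _ <| by
    rw [← Pseudoelement.comp_apply, hρ, Pseudoelement.comp_apply, hx, apply_zero]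
  obtain ⟨y, rfl⟩ := pseudo_exact_of_exact hQ x hρx
  have hy : (F.map f₁).app Y y = 0 := by
    rwa [← Pseudoelement.comp_apply, inl_pushoutProduct] at hx
  rw [zero_of_map_zero _ (pseudo_injective_of_mono _) y hy, apply_zero]

open CategoryTheory.Abelian.Pseudoelement hiding comp_apply zero_apply in
/-- The comparison map of pushouts is an epimorphism, and the kernel of `F(B₁, q)` is the image
of `F(B₁, ker q)`, which lifts through the pullback with zero component in `A₂'`. -/
theorem mono_pushoutProduct_of_mono_pullback_snd [Abelian A₂] {A₁' B₁ : A₁} (f₁ : A₁' ⟶ B₁)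
    {A₂' B₂ D : A₂} (f₂ : A₂' ⟶ B₂) (q : D ⟶ B₂) [Epi q]
    [∀ X₁, PreservesFiniteColimits (F.obj X₁)] [Mono (pushoutProduct F f₁ (pullback.snd f₂ q))] :
    Mono (pushoutProduct F f₁ f₂) := by
  set μ := pushout.map ((F.obj A₁').map (pullback.snd f₂ q)) ((F.map f₁).app (pullback f₂ q))
    ((F.obj A₁').map f₂) ((F.map f₁).app A₂') ((F.obj A₁').map q)
    ((F.obj B₁).map (pullback.fst f₂ q)) ((F.obj A₁').map (pullback.fst f₂ q))
    (by rw [← Functor.map_comp, ← Functor.map_comp, pullback.condition])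
    ((F.map f₁).naturality _).symm with hμ_def
  have : Epi μ := pushout.epi_map ..
  have hμ : μ ≫ pushoutProduct F f₁ f₂ =
      pushoutProduct F f₁ (pullback.snd f₂ q) ≫ (F.obj B₁).map q := by
    ext
    · rw [hμ_def, pushout.inl_desc_assoc, Category.assoc, inl_pushoutProduct, ← Category.assoc,
        inl_pushoutProduct]
      exact (F.map f₁).naturality q
    · rw [hμ_def, pushout.inr_desc_assoc, Category.assoc, inr_pushoutProduct, ← Category.assoc,
        inr_pushoutProduct, ← Functor.map_comp, ← Functor.map_comp, pullback.condition]
  let j : kernel q ⟶ pullback f₂ q := pullback.lift 0 (kernel.ι q) (by simp)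
  set u := (F.obj B₁).map j ≫ pushout.inr ((F.obj A₁').map (pullback.snd f₂ q))
    ((F.map f₁).app (pullback f₂ q))
  have hu : u ≫ pushoutProduct F f₁ (pullback.snd f₂ q) = (F.obj B₁).map (kernel.ι q) := by
    rw [Category.assoc, inr_pushoutProduct, ← Functor.map_comp, pullback.lift_snd]
  have huμ : u ≫ μ = 0 := by
    rw [Category.assoc, hμ_def, pushout.inr_desc, ← Category.assoc, ← Functor.map_comp,
      pullback.lift_fst, Functor.map_zero, zero_comp]
  have hK := (ShortComplex.exact_kernel q).map_mk (F.obj B₁)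
  apply mono_of_zero_of_map_zero
  intro x hx
  obtain ⟨x', rfl⟩ := pseudo_surjective_of_epi μ x
  obtain ⟨t, ht⟩ := pseudo_exact_of_exact hK (pushoutProduct F f₁ (pullback.snd f₂ q) x') <| by
    rw [← Pseudoelement.comp_apply, ← hμ, Pseudoelement.comp_apply, hx]
  have hx' : u t = x' := pseudo_injective_of_mono (pushoutProduct F f₁ (pullback.snd f₂ q)) <| by
    rw [← Pseudoelement.comp_apply, hu]; exact ht
  rw [← hx', ← Pseudoelement.comp_apply, huμ, Pseudoelement.zero_apply]

lemma pushoutProduct_comp_eq_zero [HasZeroMorphisms A₁] [HasZeroMorphisms A₂]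
    {A₁' B₁ D₁ : A₁} {f₁ : A₁' ⟶ B₁} {p₁ : B₁ ⟶ D₁} (w₁ : f₁ ≫ p₁ = 0)
    {A₂' B₂ D₂ : A₂} {f₂ : A₂' ⟶ B₂} {p₂ : B₂ ⟶ D₂} (w₂ : f₂ ≫ p₂ = 0)
    [(F.flip.obj B₂).PreservesZeroMorphisms] [(F.obj D₁).PreservesZeroMorphisms] :
    pushoutProduct F f₁ f₂ ≫ (F.map p₁).app B₂ ≫ (F.obj D₁).map p₂ = 0 := by
  ext
  · rw [comp_zero, ← Category.assoc, inl_pushoutProduct, ← Category.assoc,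
      map_app_comp_map_app_eq_zero F w₁, zero_comp]
  · rw [comp_zero, ← Category.assoc, inr_pushoutProduct, ← Category.assoc,
      (F.map p₁).naturality f₂, Category.assoc, ← Functor.map_comp, w₂, Functor.map_zero,
      comp_zero]

noncomputable def isColimitCokernelCoforkPushoutProduct [Abelian A₁] [Abelian A₂]
    [∀ X₁, PreservesFiniteColimits (F.obj X₁)] [∀ X₂, PreservesFiniteColimits (F.flip.obj X₂)]
    {A₁' B₁ D₁ : A₁} {f₁ : A₁' ⟶ B₁} {p₁ : B₁ ⟶ D₁} {w₁ : f₁ ≫ p₁ = 0}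
    (h₁ : (ShortComplex.mk f₁ p₁ w₁).Exact) [Epi p₁]
    {A₂' B₂ D₂ : A₂} {f₂ : A₂' ⟶ B₂} {p₂ : B₂ ⟶ D₂} {w₂ : f₂ ≫ p₂ = 0}
    (h₂ : (ShortComplex.mk f₂ p₂ w₂).Exact) [Epi p₂] :
    IsColimit (CokernelCofork.ofπ _ (pushoutProduct_comp_eq_zero F w₁ w₂)) := by
  have : Epi ((F.map p₁).app A₂') := (F.flip.obj A₂').map_epi p₁
  have : Epi ((F.map p₁).app B₂) := (F.flip.obj B₂).map_epi p₁
  have : Epi ((F.obj D₁).map p₂) := (F.obj D₁).map_epi p₂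
  have hB := h₁.map_mk (F.flip.obj B₂)
  have hD := h₂.map_mk (F.obj D₁)
  refine CokernelCofork.IsColimit.ofπ' _ _ fun {T} k hk => ?_
  have hk₁ : (F.map f₁).app B₂ ≫ k = 0 := by
    rw [← inl_pushoutProduct, Category.assoc, hk, comp_zero]
  have hk' : (F.map p₁).app B₂ ≫ hB.desc k hk₁ = k := hB.g_desc k hk₁
  have hk'₀ : (F.obj D₁).map f₂ ≫ hB.desc k hk₁ = 0 := by
    rw [← cancel_epi ((F.map p₁).app A₂'), comp_zero, ← Category.assoc,
      ← (F.map p₁).naturality f₂, Category.assoc, hk', ← inr_pushoutProduct, Category.assoc, hk,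
      comp_zero]
  exact ⟨hD.desc _ hk'₀, by rw [Category.assoc, hD.g_desc, hk']⟩

end PushoutProduct

/-- Two-variable case of the generalization of Hovey's criterion: for a two-variable left
adjoint `F` satisfying the splitting conditions, the pushout product of monomorphisms with
cokernels in the left classes is a monomorphism with cokernel `F(D₁, D₂)`. -/
theorem pushout_product_mono_and_cokernel
    {A₁ : Type u₁} [Category.{v₁} A₁] [Abelian A₁] [HasExt.{w₁} A₁]
    {A₂ : Type u₂} [Category.{v₂} A₂] [Abelian A₂] [HasExt.{w₂} A₂]
    {A₀ : Type u₀} [Category.{v₀} A₀] [Abelian A₀] [HasExt.{w₀} A₀]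
    (F : A₁ ⥤ A₂ ⥤ A₀)
    [∀ X₁ : A₁, (F.obj X₁).Additive] [∀ X₂ : A₂, (F.flip.obj X₂).Additive]
    (G₁ : A₂ᵒᵖ ⥤ A₀ ⥤ A₁) (G₂ : A₁ᵒᵖ ⥤ A₀ ⥤ A₂)
    (adj₁ : ∀ X₂ : A₂, F.flip.obj X₂ ⊣ G₁.obj (op X₂))
    (adj₂ : ∀ X₁ : A₁, F.obj X₁ ⊣ G₂.obj (op X₁))
    (𝒟₀ ℰ₀ : Set A₀) (𝒟₁ ℰ₁ : Set A₁) (𝒟₂ ℰ₂ : Set A₂)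
    (h₀ : IsCotorsionPair 𝒟₀ ℰ₀) (h₁ : IsCotorsionPair 𝒟₁ ℰ₁)
    (h₂ : IsCotorsionPair 𝒟₂ ℰ₂)
    (h₀c : CPIsComplete 𝒟₀ ℰ₀) (h₁c : CPIsComplete 𝒟₁ ℰ₁) (h₂c : CPIsComplete 𝒟₂ ℰ₂)
    (hsplit₁ : ∀ D₂ ∈ 𝒟₂, RightSplit (F.flip.obj D₂) 𝒟₁)
    (hsplit₂ : ∀ D₁ ∈ 𝒟₁, RightSplit (F.obj D₁) 𝒟₂)
    (hobj : ∀ D₁ ∈ 𝒟₁, ∀ D₂ ∈ 𝒟₂, (F.obj D₁).obj D₂ ∈ 𝒟₀)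
    {A₁' B₁ D₁ : A₁} (f₁ : A₁' ⟶ B₁) (p₁ : B₁ ⟶ D₁) (w₁ : f₁ ≫ p₁ = 0)
    (hS₁ : (ShortComplex.mk f₁ p₁ w₁).ShortExact) (hD₁ : D₁ ∈ 𝒟₁)
    {A₂' B₂ D₂ : A₂} (f₂ : A₂' ⟶ B₂) (p₂ : B₂ ⟶ D₂) (w₂ : f₂ ≫ p₂ = 0)
    (hS₂ : (ShortComplex.mk f₂ p₂ w₂).ShortExact) (hD₂ : D₂ ∈ 𝒟₂) :
    Mono (pushout.desc ((F.map f₁).app B₂) ((F.obj B₁).map f₂)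
        ((F.map f₁).naturality f₂)) ∧
    Nonempty (cokernel (pushout.desc ((F.map f₁).app B₂) ((F.obj B₁).map f₂)
        ((F.map f₁).naturality f₂)) ≅ (F.obj D₁).obj D₂) := by
  have : ∀ X₁, PreservesFiniteColimits (F.obj X₁) := fun X₁ =>
    have := (adj₂ X₁).leftAdjoint_preservesColimits; inferInstance
  have : ∀ X₂, PreservesFiniteColimits (F.flip.obj X₂) := fun X₂ =>
    have := (adj₁ X₂).leftAdjoint_preservesColimits; inferInstance
  have : Epi p₁ := hS₁.epi_g
  have : Epi p₂ := hS₂.epi_g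
  obtain ⟨_, D, _, q, _, hq, -, hD⟩ := h₂c.2 B₂
  have : Epi q := hq.epi_g
  have : Mono ((F.map f₁).app D) := (hsplit₁ D hD _ hS₁ hD₁).mono_f
  have : Mono ((F.obj D₁).map (pullback.snd f₂ q)) :=
    (hsplit₂ D₁ hD₁ _ (hS₂.pullback_snd q) hD₂).mono_f
  have := mono_pushoutProduct F hS₁.exact (pullback.snd f₂ q)
  exact ⟨mono_pushoutProduct_of_mono_pullback_snd F f₁ f₂ q,
    ⟨IsColimit.coconePointUniqueUpToIso (cokernelIsCokernel _)
      (isColimitCokernelCoforkPushoutProduct F hS₁.exact hS₂.exact)⟩⟩
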